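/- arXiv:1708.00039 — 2 statements merged into one kernel-verified Lean document; each statement's English description precedes it below -/
import Mathlib

section
/- Let M be a finite multiset of points in real affine (or projective) space with total multiplicity n, and let r > 0, 0 ≤ α < 1. Then the number of r-rich, α-degenerate k-flats spanned by M is at most (1-α)^{-k} n^{k+1} r^{-(k+1)}. -/
/-!
Double counting of ordered affinely independent `(k+1)`-tuples of `M`. If a `k`-flat `Λ`
containing `m` points of `M` is `α`-degenerate, then after choosing `j + 1 ≤ k` affinely
independent points of `M ∩ Λ`, their span lies in some `(k-1)`-flat inside `Λ`, so at least
`(1 - α) m` points of `Λ` extend the tuple. Hence `Λ` contains at least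
`m ((1 - α) m)^k ≥ (1 - α)^k r^(k+1)` such tuples. Each of them spans `Λ`, so the tuples of
distinct flats are distinct, and there are at most `n^(k+1)` tuples in total.
-/

open Module Finset

section

variable {𝕜 V P ι : Type*} [DivisionRing 𝕜] [AddCommGroup V] [Module 𝕜 V] [AddTorsor V P]

theorem Submodule.exists_le_le_finrank_eq [FiniteDimensional 𝕜 V] {W U : Submodule 𝕜 V}
    (hWU : W ≤ U) {d : ℕ} (hWd : finrank 𝕜 W ≤ d) (hdU : d ≤ finrank 𝕜 U) :
    ∃ W' : Submodule 𝕜 V, W ≤ W' ∧ W' ≤ U ∧ finrank 𝕜 W' = d := by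
  induction d, hWd using Nat.le_induction with
  | base => exact ⟨W, le_rfl, hWU, rfl⟩
  | succ d _ ih =>
    obtain ⟨W', hWW', hW'U, hW'd⟩ := ih (by omega)
    obtain ⟨v, hvU, hvW'⟩ : ∃ v ∈ U, v ∉ W' := SetLike.not_le_iff_exists.mp fun hUW' =>
      (Submodule.finrank_mono hUW').not_gt (by omega)
    refine ⟨W' ⊔ Submodule.span 𝕜 {v}, hWW'.trans le_sup_left,
      sup_le hW'U ((Submodule.span_singleton_le_iff_mem v U).mpr hvU), ?_⟩
    rw [finrank_sup_span_singleton hvW', hW'd]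

theorem AffineSubspace.exists_le_le_finrank_direction_eq [FiniteDimensional 𝕜 V]
    {A Λ : AffineSubspace 𝕜 P} (hAΛ : A ≤ Λ) (hA : (A : Set P).Nonempty) {d : ℕ}
    (hAd : finrank 𝕜 A.direction ≤ d) (hdΛ : d ≤ finrank 𝕜 Λ.direction) :
    ∃ Λ' : AffineSubspace 𝕜 P, A ≤ Λ' ∧ Λ' ≤ Λ ∧ finrank 𝕜 Λ'.direction = d := by
  obtain ⟨x, hx⟩ := hA
  obtain ⟨W, hAW, hWΛ, hWd⟩ :=
    Submodule.exists_le_le_finrank_eq (AffineSubspace.direction_le hAΛ) hAd hdΛ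
  refine ⟨AffineSubspace.mk' x W, ?_, ?_, by rwa [AffineSubspace.direction_mk']⟩
  · rw [← AffineSubspace.mk'_eq hx, AffineSubspace.mk'_le_mk'_iff]
    exact hAW
  · rw [← AffineSubspace.mk'_eq (hAΛ hx), AffineSubspace.mk'_le_mk'_iff]
    exact hWΛ

theorem AffineIndependent.snoc {j : ℕ} {q : Fin j → P} (hq : AffineIndependent 𝕜 q) {x : P}
    (hx : x ∉ affineSpan 𝕜 (Set.range q)) :
    AffineIndependent 𝕜 (Fin.snoc q x : Fin (j + 1) → P) := by
  have hrange : (Fin.snoc q x : Fin (j + 1) → P) '' {y | y ≠ Fin.last j} = Set.range q := by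
    have : {y : Fin (j + 1) | y ≠ Fin.last j} = Set.range Fin.castSucc := by
      ext y
      simp [← Fin.lt_last_iff_ne_last, Fin.lt_def]
    rw [this, ← Set.range_comp]
    simp [Function.comp_def]
  refine AffineIndependent.affineIndependent_of_notMem_span (i := Fin.last j) ?_
    (by rwa [hrange, Fin.snoc_last])
  rw [← affineIndependent_equiv (finSuccAboveEquiv (Fin.last j))]
  convert hq using 1
  ext y
  simp [finSuccAboveEquiv_apply]

open scoped Classical in
noncomputable def affineIndependentTuplesIn [Fintype ι] (p : ι → P) (s : AffineSubspace 𝕜 P)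
    (j : ℕ) : Finset (Fin j → ι) :=
  {g | AffineIndependent 𝕜 (p ∘ g) ∧ ∀ t, p (g t) ∈ s}

variable [Fintype ι] {p : ι → P}

theorem mem_affineIndependentTuplesIn {s : AffineSubspace 𝕜 P} {j : ℕ} {g : Fin j → ι} :
    g ∈ affineIndependentTuplesIn p s j ↔
      AffineIndependent 𝕜 (p ∘ g) ∧ ∀ t, p (g t) ∈ s := by
  simp [affineIndependentTuplesIn]

theorem ncard_le_card_affineIndependentTuplesIn_one (s : AffineSubspace 𝕜 P) :
    {i | p i ∈ s}.ncard ≤ #(affineIndependentTuplesIn p s 1) := by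
  classical
  rw [Set.ncard_eq_toFinset_card', Set.toFinset_ofPred]
  refine card_le_card_of_injOn (fun i _ => i) (fun i hi => ?_) fun i _ i' _ h => congrFun h 0
  simp only [coe_filter, mem_univ, true_and, Set.mem_ofPred_eq] at hi
  simp [mem_affineIndependentTuplesIn, affineIndependent_of_subsingleton, hi]

theorem sum_ncard_notMem_affineSpan_le_card_affineIndependentTuplesIn
    (s : AffineSubspace 𝕜 P) (j : ℕ) :
    ∑ g ∈ affineIndependentTuplesIn p s j,
        {i | p i ∈ s ∧ p i ∉ affineSpan 𝕜 (Set.range (p ∘ g))}.ncard ≤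
      #(affineIndependentTuplesIn p s (j + 1)) := by
  classical
  simp_rw [Set.ncard_eq_toFinset_card', Set.toFinset_ofPred, ← card_sigma]
  refine card_le_card_of_injOn (fun x => Fin.snoc x.1 x.2) ?_ ?_
  · rintro ⟨g, i⟩ hgi
    simp only [coe_sigma, Set.mem_sigma_iff, mem_coe, mem_filter, mem_univ, true_and,
      mem_affineIndependentTuplesIn] at hgi ⊢
    obtain ⟨⟨hg, hgs⟩, his, hiA⟩ := hgi
    refine ⟨?_, Fin.lastCases ?_ fun t => ?_⟩
    · rw [Fin.comp_snoc]
      exact hg.snoc hiA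
    · simpa using his
    · simpa using hgs t
  · rintro ⟨g, i⟩ - ⟨g', i'⟩ - h
    obtain ⟨rfl, rfl⟩ := Fin.snoc_injective2 h
    rfl

theorem affineSpan_eq_of_mem_affineIndependentTuplesIn [FiniteDimensional 𝕜 V]
    {s : AffineSubspace 𝕜 P} {j : ℕ} (hs : finrank 𝕜 s.direction = j) {g : Fin (j + 1) → ι}
    (hg : g ∈ affineIndependentTuplesIn p s (j + 1)) :
    affineSpan 𝕜 (Set.range (p ∘ g)) = s := by
  rw [mem_affineIndependentTuplesIn] at hg
  refine hg.1.affineSpan_eq_of_le_of_card_eq_finrank_add_one ?_ (by simp [hs])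
  rw [affineSpan_le]
  rintro _ ⟨t, rfl⟩
  exact hg.2 t

theorem pairwiseDisjoint_affineIndependentTuplesIn [FiniteDimensional 𝕜 V] (j : ℕ) :
    {s : AffineSubspace 𝕜 P | finrank 𝕜 s.direction = j}.PairwiseDisjoint
      fun s => affineIndependentTuplesIn p s (j + 1) := by
  intro s hs s' hs' hne
  refine disjoint_left.mpr fun g hg hg' => hne ?_
  rw [← affineSpan_eq_of_mem_affineIndependentTuplesIn hs hg,
    affineSpan_eq_of_mem_affineIndependentTuplesIn hs' hg']

variable [FiniteDimensional 𝕜 V] {Λ : AffineSubspace 𝕜 P} {k : ℕ} {α : ℝ}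

theorem one_sub_mul_ncard_le_ncard_notMem (hΛ : finrank 𝕜 Λ.direction = k)
    (hdeg : ∀ Λ' : AffineSubspace 𝕜 P, Λ' ≤ Λ → finrank 𝕜 Λ'.direction = k - 1 →
      ({i : ι | p i ∈ Λ'}.ncard : ℝ) ≤ α * ({i : ι | p i ∈ Λ}.ncard : ℝ))
    {A : AffineSubspace 𝕜 P} (hAΛ : A ≤ Λ) (hA : (A : Set P).Nonempty)
    (hAk : finrank 𝕜 A.direction < k) :
    (1 - α) * ({i : ι | p i ∈ Λ}.ncard : ℝ) ≤ {i | p i ∈ Λ ∧ p i ∉ A}.ncard := by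
  obtain ⟨Λ', hAΛ', hΛ'Λ, hΛ'⟩ :=
    AffineSubspace.exists_le_le_finrank_direction_eq hAΛ hA (d := k - 1) (by omega) (by omega)
  have hcover : {i | p i ∈ Λ} ⊆ {i | p i ∈ Λ ∧ p i ∉ A} ∪ {i | p i ∈ Λ'} := fun i hi => by
    by_cases hiA : p i ∈ A
    · exact Or.inr (hAΛ' hiA)
    · exact Or.inl ⟨hi, hiA⟩
  have hcard : ({i | p i ∈ Λ}.ncard : ℝ) ≤
      {i | p i ∈ Λ ∧ p i ∉ A}.ncard + {i | p i ∈ Λ'}.ncard := by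
    exact_mod_cast (Set.ncard_le_ncard hcover).trans (Set.ncard_union_le _ _)
  linarith [hdeg Λ' hΛ'Λ hΛ']

theorem mul_pow_le_card_affineIndependentTuplesIn (hα : α ≤ 1)
    (hΛ : finrank 𝕜 Λ.direction = k)
    (hdeg : ∀ Λ' : AffineSubspace 𝕜 P, Λ' ≤ Λ → finrank 𝕜 Λ'.direction = k - 1 →
      ({i : ι | p i ∈ Λ'}.ncard : ℝ) ≤ α * ({i : ι | p i ∈ Λ}.ncard : ℝ))
    {j : ℕ} (hj : j ≤ k) :
    ({i : ι | p i ∈ Λ}.ncard : ℝ) * ((1 - α) * {i : ι | p i ∈ Λ}.ncard) ^ j ≤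
      #(affineIndependentTuplesIn p Λ (j + 1)) := by
  set m : ℝ := ({i : ι | p i ∈ Λ}.ncard : ℝ)
  induction j with
  | zero =>
    simpa [m] using ncard_le_card_affineIndependentTuplesIn_one (p := p) Λ
  | succ j ih =>
    have hstep : ∀ g ∈ affineIndependentTuplesIn p Λ (j + 1),
        (1 - α) * m ≤ {i | p i ∈ Λ ∧ p i ∉ affineSpan 𝕜 (Set.range (p ∘ g))}.ncard := by
      intro g hg
      rw [mem_affineIndependentTuplesIn] at hg
      refine one_sub_mul_ncard_le_ncard_notMem hΛ hdeg ?_ ?_ ?_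
      · rw [affineSpan_le]
        rintro _ ⟨t, rfl⟩
        exact hg.2 t
      · exact ⟨p (g 0), mem_affineSpan 𝕜 ⟨0, rfl⟩⟩
      · rw [direction_affineSpan, hg.1.finrank_vectorSpan (n := j) (by simp)]
        omega
    calc m * ((1 - α) * m) ^ (j + 1) = (1 - α) * m * (m * ((1 - α) * m) ^ j) := by ring
      _ ≤ (1 - α) * m * #(affineIndependentTuplesIn p Λ (j + 1)) := by
        gcongr
        exact ih (by omega)
      _ ≤ ∑ g ∈ affineIndependentTuplesIn p Λ (j + 1),
          ({i | p i ∈ Λ ∧ p i ∉ affineSpan 𝕜 (Set.range (p ∘ g))}.ncard : ℝ) := by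
        rw [mul_comm, ← nsmul_eq_mul]
        exact card_nsmul_le_sum _ _ _ hstep
      _ ≤ #(affineIndependentTuplesIn p Λ (j + 2)) := by
        exact_mod_cast sum_ncard_notMem_affineSpan_le_card_affineIndependentTuplesIn Λ (j + 1)

end

theorem stmt_2_general {V : Type*} [AddCommGroup V] [Module ℝ V] [FiniteDimensional ℝ V]
    {ι : Type*} [Fintype ι] (p : ι → V) (n : ℕ) (hn : n = Fintype.card ι)
    (k : ℕ) (r α : ℝ) (hr : 0 < r) (hα1 : α < 1)
    (S : Finset (AffineSubspace ℝ V))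
    (hS : ∀ Λ ∈ S,
      -- Λ is a k-flat
      finrank ℝ Λ.direction = k ∧
      -- Λ is r-rich (points counted with multiplicity)
      r ≤ ({i : ι | p i ∈ Λ}.ncard : ℝ) ∧
      -- Λ is α-degenerate: every (k-1)-flat contained in Λ contains at most
      -- α · |M ∩ Λ| points of M (with multiplicity)
      (∀ Λ' : AffineSubspace ℝ V, Λ' ≤ Λ → finrank ℝ Λ'.direction = k - 1 →
        ({i : ι | p i ∈ Λ'}.ncard : ℝ) ≤ α * ({i : ι | p i ∈ Λ}.ncard : ℝ)) ∧
      -- Λ is spanned by M: it contains k+1 affinely independent points of M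
      (∃ f : Fin (k + 1) → ι, AffineIndependent ℝ (p ∘ f) ∧ ∀ j, p (f j) ∈ Λ)) :
    (S.card : ℝ) ≤ (1 - α)⁻¹ ^ k * (n : ℝ) ^ (k + 1) / r ^ (k + 1) := by
  classical
  have hα : 0 < 1 - α := by linarith
  have hcount : ∀ Λ ∈ S,
      (1 - α) ^ k * r ^ (k + 1) ≤ #(affineIndependentTuplesIn p Λ (k + 1)) := by
    intro Λ hΛ
    obtain ⟨hdim, hrich, hdeg, -⟩ := hS Λ hΛ
    calc (1 - α) ^ k * r ^ (k + 1) = r * ((1 - α) * r) ^ k := by rw [mul_pow, pow_succ]; ring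
      _ ≤ ({i | p i ∈ Λ}.ncard : ℝ) * ((1 - α) * {i | p i ∈ Λ}.ncard) ^ k := by gcongr
      _ ≤ _ := mul_pow_le_card_affineIndependentTuplesIn hα1.le hdim hdeg le_rfl
  have htotal : ∑ Λ ∈ S, #(affineIndependentTuplesIn p Λ (k + 1)) ≤ n ^ (k + 1) := by
    rw [← card_biUnion ((pairwiseDisjoint_affineIndependentTuplesIn k).subset
      fun Λ hΛ => (hS Λ hΛ).1)]
    simpa [hn] using
      card_le_univ (S.biUnion fun Λ => affineIndependentTuplesIn p Λ (k + 1))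
  have hmain : (S.card : ℝ) * ((1 - α) ^ k * r ^ (k + 1)) ≤ n ^ (k + 1) := by
    rw [← nsmul_eq_mul]
    exact (card_nsmul_le_sum S _ _ hcount).trans (by exact_mod_cast htotal)
  rw [inv_pow, le_div_iff₀ (by positivity), ← div_eq_inv_mul, le_div_iff₀ (by positivity)]
  linarith

/-- Let `M` be a finite multiset of points in real affine space (encoded as a finite
indexed family `p : ι → V`) with total multiplicity `n = |ι|`, let `r > 0` and
`0 ≤ α < 1`. The number of `r`-rich, `α`-degenerate `k`-flats spanned by `M` is at
most `(1-α)^{-k} n^{k+1} r^{-(k+1)}`. -/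
theorem stmt_2 {V : Type*} [AddCommGroup V] [Module ℝ V] [FiniteDimensional ℝ V]
    {ι : Type*} [Fintype ι] (p : ι → V) (n : ℕ) (hn : n = Fintype.card ι)
    (k : ℕ) (hk : 1 ≤ k) (r α : ℝ) (hr : 0 < r) (hα0 : 0 ≤ α) (hα1 : α < 1)
    (S : Finset (AffineSubspace ℝ V))
    (hS : ∀ Λ ∈ S,
      -- Λ is a k-flat
      finrank ℝ Λ.direction = k ∧
      -- Λ is r-rich (points counted with multiplicity)
      r ≤ ({i : ι | p i ∈ Λ}.ncard : ℝ) ∧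
      -- Λ is α-degenerate: every (k-1)-flat contained in Λ contains at most
      -- α · |M ∩ Λ| points of M (with multiplicity)
      (∀ Λ' : AffineSubspace ℝ V, Λ' ≤ Λ → finrank ℝ Λ'.direction = k - 1 →
        ({i : ι | p i ∈ Λ'}.ncard : ℝ) ≤ α * ({i : ι | p i ∈ Λ}.ncard : ℝ)) ∧
      -- Λ is spanned by M: it contains k+1 affinely independent points of M
      (∃ f : Fin (k + 1) → ι, AffineIndependent ℝ (p ∘ f) ∧ ∀ j, p (f j) ∈ Λ)) :
    (S.card : ℝ) ≤ (1 - α)⁻¹ ^ k * (n : ℝ) ^ (k + 1) / r ^ (k + 1) :=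
  stmt_2_general p n hn k r α hr hα1 S hS
end

section
/- Let P be a set of n points with n/2 points on a fixed (k-1)-flat Γ and n/2 points on a line ℓ disjoint from Γ (for k > 1). Then every k-flat spanned by P contains either Γ or ℓ, and P spans at most n/2 + C(n/2, k-1) k-flats. -/
/-!
An affinely independent `(k+1)`-tuple from `Γ ∪ ℓ` has at most two points on the line `ℓ`
and at most `k` on the `(k-1)`-flat `Γ`. If two of them lie on `ℓ`, the spanned `k`-flat `Λ`
contains `ℓ` and `k - 1` independent points of `Γ`; otherwise it contains `Γ` (spanned by `k` of
the points) and a point of `ℓ`. Since `dim (Γ ⊔ ℓ) ≥ k + 1`, the directions of `Γ` and `ℓ` are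
independent, so the join of `ℓ` with a `(k-2)`-flat inside `Γ`, or of `Γ` with a point of `ℓ`, is
already `k`-dimensional and hence equal to `Λ`. Thus `Λ` is determined by a `(k-1)`-subset of
`P ∩ Γ` or by a point of `P ∩ ℓ`.
-/

open Module Finset

namespace AffineSubspace

variable {𝕜 V P : Type*} [DivisionRing 𝕜] [AddCommGroup V] [Module 𝕜 V] [AddTorsor V P]

theorem eq_of_le_of_finrank_direction_le {s₁ s₂ : AffineSubspace 𝕜 P}
    [FiniteDimensional 𝕜 s₂.direction] (hle : s₁ ≤ s₂) (hn : (s₁ : Set P).Nonempty)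
    (h : finrank 𝕜 s₂.direction ≤ finrank 𝕜 s₁.direction) : s₁ = s₂ :=
  eq_of_direction_eq_of_nonempty_of_le
    (Submodule.eq_of_le_of_finrank_le (direction_le hle) h) hn hle

theorem finrank_direction_sup_add_finrank_inf_le [FiniteDimensional 𝕜 V]
    {s₁ s₂ : AffineSubspace 𝕜 P} {p₁ p₂ : P} (hp₁ : p₁ ∈ s₁) (hp₂ : p₂ ∈ s₂) :
    finrank 𝕜 (s₁ ⊔ s₂).direction + finrank 𝕜 ↥(s₁.direction ⊓ s₂.direction) ≤
      finrank 𝕜 s₁.direction + finrank 𝕜 s₂.direction + 1 := by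
  have hline : finrank 𝕜 (𝕜 ∙ (p₂ -ᵥ p₁)) ≤ 1 :=
    (finrank_span_le_card _).trans (by simp)
  have hsum := Submodule.finrank_add_le_finrank_add_finrank
    (s₁.direction ⊔ s₂.direction) (𝕜 ∙ (p₂ -ᵥ p₁))
  rw [direction_sup hp₁ hp₂]
  have := Submodule.finrank_sup_add_finrank_inf_eq s₁.direction s₂.direction
  omega

theorem disjoint_direction_of_finrank_direction_sup {s₁ s₂ : AffineSubspace 𝕜 P}
    [FiniteDimensional 𝕜 V]
    (h : finrank 𝕜 s₁.direction + finrank 𝕜 s₂.direction + 1 ≤ finrank 𝕜 (s₁ ⊔ s₂).direction) :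
    Disjoint s₁.direction s₂.direction := by
  obtain hs₁ | ⟨p₁, hp₁⟩ := (s₁ : Set P).eq_empty_or_nonempty
  · rw [coe_eq_bot_iff] at hs₁
    simp [hs₁]
  obtain hs₂ | ⟨p₂, hp₂⟩ := (s₂ : Set P).eq_empty_or_nonempty
  · rw [coe_eq_bot_iff] at hs₂
    simp [hs₂]
  have := finrank_direction_sup_add_finrank_inf_le hp₁ hp₂
  rw [disjoint_iff, ← Submodule.finrank_eq_zero]
  omega

theorem finrank_direction_sup_of_disjoint [FiniteDimensional 𝕜 V] {s₁ s₂ : AffineSubspace 𝕜 P}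
    (h₁ : (s₁ : Set P).Nonempty) (h₂ : (s₂ : Set P).Nonempty) (he : (s₁ ∩ s₂ : Set P) = ∅)
    (hd : Disjoint s₁.direction s₂.direction) :
    finrank 𝕜 (s₁ ⊔ s₂).direction = finrank 𝕜 s₁.direction + finrank 𝕜 s₂.direction + 1 := by
  have hlt := Submodule.finrank_lt_finrank_of_lt
    (sup_direction_lt_of_nonempty_of_inter_empty h₁ h₂ he)
  have hle := finrank_direction_sup_add_finrank_inf_le h₁.some_mem h₂.some_mem
  have hsum := Submodule.finrank_sup_add_finrank_inf_eq s₁.direction s₂.direction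
  rw [hd.eq_bot, finrank_bot] at hle hsum
  omega

end AffineSubspace

namespace AffineIndependent

open AffineSubspace

variable {𝕜 V P ι : Type*} [DivisionRing 𝕜] [AddCommGroup V] [Module 𝕜 V] [AddTorsor V P]
  {f : ι → P}

theorem card_le_finrank_succ_of_forall_mem {s : AffineSubspace 𝕜 P}
    [FiniteDimensional 𝕜 s.direction] (hf : AffineIndependent 𝕜 f) {t : Finset ι}
    (ht : ∀ i ∈ t, f i ∈ s) : #t ≤ finrank 𝕜 s.direction + 1 := by
  have hle : vectorSpan 𝕜 (Set.range fun i : t => f i) ≤ s.direction := by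
    rw [← direction_affineSpan]
    exact direction_le (affineSpan_le.2 (Set.range_subset_iff.2 fun i => ht i i.2))
  simpa using (hf.comp_embedding (Function.Embedding.subtype (· ∈ t))).card_le_finrank_succ.trans
    (Nat.add_le_add_right (Submodule.finrank_mono hle) 1)

theorem le_of_finrank_succ_le_card {s Λ : AffineSubspace 𝕜 P}
    [FiniteDimensional 𝕜 s.direction] (hf : AffineIndependent 𝕜 f) {t : Finset ι}
    (hts : ∀ i ∈ t, f i ∈ s) (htΛ : ∀ i ∈ t, f i ∈ Λ) (hcard : finrank 𝕜 s.direction + 1 ≤ #t) :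
    s ≤ Λ := by
  classical
  obtain ⟨u, hut, hu⟩ := exists_subset_card_eq hcard
  have hspan : affineSpan 𝕜 (u.image f : Set P) = s := by
    refine hf.affineSpan_image_finset_eq_of_le_of_card_eq_finrank_add_one (affineSpan_le.2 ?_) hu
    rw [coe_image, Set.image_subset_iff]
    exact fun i hi => hts i (hut hi)
  rw [← hspan, affineSpan_le, coe_image, Set.image_subset_iff]
  exact fun i hi => htΛ i (hut hi)

theorem eq_sup_affineSpan_image [FiniteDimensional 𝕜 V] [DecidableEq P]
    (hf : AffineIndependent 𝕜 f) {s s' Λ : AffineSubspace 𝕜 P} (hsΛ : s ≤ Λ)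
    (hs : (s : Set P).Nonempty) (he : (s ∩ s' : Set P) = ∅)
    (hd : Disjoint s.direction s'.direction) {t : Finset ι} (hts' : ∀ i ∈ t, f i ∈ s')
    (htΛ : ∀ i ∈ t, f i ∈ Λ) (hcard : finrank 𝕜 s.direction + #t = finrank 𝕜 Λ.direction) :
    Λ = s ⊔ affineSpan 𝕜 (t.image f : Set P) := by
  obtain rfl | ht := t.eq_empty_or_nonempty
  · simpa using (eq_of_le_of_finrank_direction_le hsΛ hs (by simp [← hcard])).symm
  obtain ⟨m, hm⟩ : ∃ m, #t = m + 1 := Nat.exists_eq_succ_of_ne_zero ht.card_pos.ne'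
  set A := affineSpan 𝕜 (t.image f : Set P)
  have hAs' : A ≤ s' := affineSpan_le.2 (by rw [coe_image, Set.image_subset_iff]; exact hts')
  have hAΛ : A ≤ Λ := affineSpan_le.2 (by rw [coe_image, Set.image_subset_iff]; exact htΛ)
  have hA : finrank 𝕜 A.direction = m := by
    rw [direction_affineSpan]
    exact hf.finrank_vectorSpan_image_finset hm
  have hsA : finrank 𝕜 (s ⊔ A).direction = finrank 𝕜 Λ.direction := by
    have hAne : (A : Set P).Nonempty := (affineSpan_nonempty 𝕜).2 (ht.image f).to_set
    rw [finrank_direction_sup_of_disjoint hs hAne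
      (Set.subset_empty_iff.1 (he ▸ Set.inter_subset_inter_right _ hAs'))
      (hd.mono_right (direction_le hAs'))]
    omega
  exact (eq_of_le_of_finrank_direction_le (sup_le hsΛ hAΛ)
    (hs.mono (SetLike.coe_subset_coe.2 le_sup_left)) hsA.ge).symm

open Classical in
theorem exists_powersetCard_eq_sup_affineSpan [Fintype ι] [FiniteDimensional 𝕜 V]
    (hf : AffineIndependent 𝕜 f) {s s' Λ : AffineSubspace 𝕜 P} (hsΛ : s ≤ Λ)
    (hs : (s : Set P).Nonempty) (he : (s ∩ s' : Set P) = ∅)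
    (hd : Disjoint s.direction s'.direction) (hfΛ : ∀ i, f i ∈ Λ) (u : Finset P)
    (hfu : ∀ i, f i ∈ u) {m : ℕ} (hm : m ≤ #{i | f i ∈ s'})
    (hcard : finrank 𝕜 s.direction + m = finrank 𝕜 Λ.direction) :
    ∃ T ∈ powersetCard m {x ∈ u | x ∈ s'}, Λ = s ⊔ affineSpan 𝕜 (T : Set P) := by
  obtain ⟨t, hts, rfl⟩ := exists_subset_card_eq hm
  have hts' : ∀ i ∈ t, f i ∈ s' := fun i hi => (mem_filter.1 (hts hi)).2
  refine ⟨t.image f, mem_powersetCard.2 ⟨?_, card_image_of_injective _ hf.injective⟩,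
    hf.eq_sup_affineSpan_image hsΛ hs he hd hts' (fun i _ => hfΛ i) hcard⟩
  simpa [subset_iff] using fun i hi => ⟨hfu i, hts' i hi⟩

end AffineIndependent

section FlatAndLine

variable {𝕜 V P : Type*} [DivisionRing 𝕜] [AddCommGroup V] [Module 𝕜 V] [AddTorsor V P]
  [FiniteDimensional 𝕜 V] {k : ℕ} {Γ ℓ Λ : AffineSubspace 𝕜 P} {f : Fin (k + 1) → P}

open Classical in
theorem card_filter_mem_bounds (hΓ : finrank 𝕜 Γ.direction + 1 = k)
    (hℓ : finrank 𝕜 ℓ.direction = 1) (hf : AffineIndependent 𝕜 f)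
    (hfc : ∀ i, f i ∈ Γ ∨ f i ∈ ℓ) :
    #{i | f i ∈ Γ} ≤ k ∧ #{i | f i ∈ ℓ} ≤ 2 ∧ k + 1 ≤ #{i | f i ∈ Γ} + #{i | f i ∈ ℓ} := by
  refine ⟨?_, ?_, ?_⟩
  · simpa [hΓ] using
      hf.card_le_finrank_succ_of_forall_mem (s := Γ) fun i hi => (mem_filter.1 hi).2
  · simpa [hℓ] using
      hf.card_le_finrank_succ_of_forall_mem (s := ℓ) fun i hi => (mem_filter.1 hi).2
  · calc k + 1 = #({i | f i ∈ Γ ∨ f i ∈ ℓ} : Finset (Fin (k + 1))) := by simp [hfc]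
      _ ≤ _ := by rw [filter_or]; exact card_union_le _ _

open Classical in
theorem exists_powersetCard_eq_sup_affineSpan_of_forall_mem_or_mem
    (hΓ : finrank 𝕜 Γ.direction + 1 = k) (hℓ : finrank 𝕜 ℓ.direction = 1)
    (he : (Γ ∩ ℓ : Set P) = ∅) (hd : Disjoint Γ.direction ℓ.direction)
    (hΛ : finrank 𝕜 Λ.direction = k) (hf : AffineIndependent 𝕜 f)
    (hfc : ∀ i, f i ∈ Γ ∨ f i ∈ ℓ) (hfΛ : ∀ i, f i ∈ Λ) (u : Finset P) (hfu : ∀ i, f i ∈ u) :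
    (∃ T ∈ powersetCard (finrank 𝕜 Γ.direction) {x ∈ u | x ∈ Γ},
        Λ = ℓ ⊔ affineSpan 𝕜 (T : Set P)) ∨
      ∃ T ∈ powersetCard 1 {x ∈ u | x ∈ ℓ}, Λ = Γ ⊔ affineSpan 𝕜 (T : Set P) := by
  obtain ⟨hΓk, hℓ2, hsum⟩ := card_filter_mem_bounds hΓ hℓ hf hfc
  have hmem : ∀ s : AffineSubspace 𝕜 P, ∀ i ∈ ({i | f i ∈ s} : Finset _), f i ∈ s :=
    fun _ _ hi => (mem_filter.1 hi).2
  have hne : ∀ {s : AffineSubspace 𝕜 P}, 0 < #{i | f i ∈ s} → (s : Set P).Nonempty :=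
    fun h => (card_pos.1 h).elim fun i hi => ⟨f i, hmem _ i hi⟩
  by_cases h2 : 2 ≤ #{i | f i ∈ ℓ}
  · have hℓΛ : ℓ ≤ Λ :=
      hf.le_of_finrank_succ_le_card (hmem ℓ) (fun i _ => hfΛ i) (by omega)
    exact Or.inl (hf.exists_powersetCard_eq_sup_affineSpan hℓΛ (hne (by omega))
      (by rwa [Set.inter_comm]) hd.symm hfΛ u hfu (by omega) (by omega))
  · have hΓΛ : Γ ≤ Λ :=
      hf.le_of_finrank_succ_le_card (hmem Γ) (fun i _ => hfΛ i) (by omega)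
    exact Or.inr (hf.exists_powersetCard_eq_sup_affineSpan hΓΛ (hne (by omega)) he hd hfΛ u
      hfu (by omega) (by omega))

end FlatAndLine

theorem stmt_8_general {V : Type*} [AddCommGroup V] [Module ℝ V] [FiniteDimensional ℝ V]
    (k n : ℕ) (hk : 1 < k)
    (Γ ℓ : AffineSubspace ℝ V)
    (hΓ : finrank ℝ Γ.direction = k - 1)
    (hℓ : finrank ℝ ℓ.direction = 1)
    (hdisj : (Γ : Set V) ∩ (ℓ : Set V) = ∅)
    (hspan : k + 1 ≤ finrank ℝ (Γ ⊔ ℓ).direction)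
    (P : Finset V)
    (hcover : (P : Set V) ⊆ (Γ : Set V) ∪ (ℓ : Set V))
    (hPΓ : ((P : Set V) ∩ (Γ : Set V)).ncard = n / 2)
    (hPℓ : ((P : Set V) ∩ (ℓ : Set V)).ncard = n / 2) :
    (∀ Λ : AffineSubspace ℝ V, finrank ℝ Λ.direction = k →
      (∃ f : Fin (k + 1) → V, AffineIndependent ℝ f ∧ (∀ j, f j ∈ P) ∧ ∀ j, f j ∈ Λ) →
      Γ ≤ Λ ∨ ℓ ≤ Λ) ∧
    (∀ S : Finset (AffineSubspace ℝ V),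
      (∀ Λ ∈ S, finrank ℝ Λ.direction = k ∧
        ∃ f : Fin (k + 1) → V, AffineIndependent ℝ f ∧ (∀ j, f j ∈ P) ∧ ∀ j, f j ∈ Λ) →
      S.card ≤ n / 2 + (n / 2).choose (k - 1)) := by
  classical
  have hd : Disjoint Γ.direction ℓ.direction :=
    AffineSubspace.disjoint_direction_of_finrank_direction_sup (by omega)
  have hrep : ∀ Λ : AffineSubspace ℝ V, finrank ℝ Λ.direction = k →
      (∃ f : Fin (k + 1) → V, AffineIndependent ℝ f ∧ (∀ j, f j ∈ P) ∧ ∀ j, f j ∈ Λ) →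
      (∃ T ∈ powersetCard (k - 1) {x ∈ P | x ∈ Γ}, Λ = ℓ ⊔ affineSpan ℝ (T : Set V)) ∨
        ∃ T ∈ powersetCard 1 {x ∈ P | x ∈ ℓ}, Λ = Γ ⊔ affineSpan ℝ (T : Set V) := by
    rintro Λ hΛ ⟨f, hf, hfP, hfΛ⟩
    rw [← hΓ]
    exact exists_powersetCard_eq_sup_affineSpan_of_forall_mem_or_mem (by omega) hℓ hdisj hd hΛ
      hf (fun i => hcover (hfP i)) hfΛ P hfP
  refine ⟨fun Λ hΛ hspanned => ?_, fun S hS => ?_⟩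
  · obtain ⟨T, -, rfl⟩ | ⟨T, -, rfl⟩ := hrep Λ hΛ hspanned
    exacts [Or.inr le_sup_left, Or.inl le_sup_left]
  have hcard : ∀ Q : AffineSubspace ℝ V, #{x ∈ P | x ∈ Q} = ((P : Set V) ∩ Q).ncard :=
    fun Q => by rw [← Set.ncard_coe_finset, coe_filter]; rfl
  calc #S ≤ #((powersetCard (k - 1) {x ∈ P | x ∈ Γ}).image
          (fun T : Finset V => ℓ ⊔ affineSpan ℝ (T : Set V)) ∪
        (powersetCard 1 {x ∈ P | x ∈ ℓ}).image
          (fun T : Finset V => Γ ⊔ affineSpan ℝ (T : Set V))) := by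
        refine card_le_card fun Λ hΛ => ?_
        rcases hrep Λ (hS Λ hΛ).1 (hS Λ hΛ).2 with ⟨T, hT, rfl⟩ | ⟨T, hT, rfl⟩
        exacts [mem_union_left _ (mem_image_of_mem _ hT),
          mem_union_right _ (mem_image_of_mem _ hT)]
    _ ≤ (n / 2).choose (k - 1) + (n / 2).choose 1 :=
        (card_union_le _ _).trans (add_le_add (card_image_le.trans (by simp [hcard, hPΓ]))
          (card_image_le.trans (by simp [hcard, hPℓ])))
    _ = n / 2 + (n / 2).choose (k - 1) := by rw [Nat.choose_one_right, add_comm]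

/-- Let `P` be a set of `n` points with `n/2` points on a fixed `(k-1)`-flat `Γ` and
`n/2` points on a line `ℓ` disjoint from `Γ` (for `k > 1`, with `Γ` and `ℓ` together
spanning a flat of dimension at least `k+1`). Then every `k`-flat spanned by `P`
contains either `Γ` or `ℓ`, and `P` spans at most `n/2 + C(n/2, k-1)` `k`-flats. -/
theorem stmt_8 {V : Type*} [AddCommGroup V] [Module ℝ V] [FiniteDimensional ℝ V]
    (k n : ℕ) (hk : 1 < k) (h2 : 2 ∣ n)
    (Γ ℓ : AffineSubspace ℝ V)
    (hΓ : finrank ℝ Γ.direction = k - 1)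
    (hℓ : finrank ℝ ℓ.direction = 1)
    (hdisj : (Γ : Set V) ∩ (ℓ : Set V) = ∅)
    (hspan : k + 1 ≤ finrank ℝ (Γ ⊔ ℓ).direction)
    (P : Finset V) (hn : P.card = n)
    (hcover : (P : Set V) ⊆ (Γ : Set V) ∪ (ℓ : Set V))
    (hPΓ : ((P : Set V) ∩ (Γ : Set V)).ncard = n / 2)
    (hPℓ : ((P : Set V) ∩ (ℓ : Set V)).ncard = n / 2) :
    (∀ Λ : AffineSubspace ℝ V, finrank ℝ Λ.direction = k →
      (∃ f : Fin (k + 1) → V, AffineIndependent ℝ f ∧ (∀ j, f j ∈ P) ∧ ∀ j, f j ∈ Λ) →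
      Γ ≤ Λ ∨ ℓ ≤ Λ) ∧
    (∀ S : Finset (AffineSubspace ℝ V),
      (∀ Λ ∈ S, finrank ℝ Λ.direction = k ∧
        ∃ f : Fin (k + 1) → V, AffineIndependent ℝ f ∧ (∀ j, f j ∈ P) ∧ ∀ j, f j ∈ Λ) →
      S.card ≤ n / 2 + (n / 2).choose (k - 1)) :=
  stmt_8_general k n hk Γ ℓ hΓ hℓ hdisj hspan P hcover hPΓ hPℓ
end
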